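/- Let (A ♯_σ^× H, β ⊗ α) be a Radford [(m,k),m]-biproduct monoidal Hom-bialgebra with σ convolution invertible, and let φ^l(l ⊗ (a ⊗ h)) = (α(l₁₁)·β⁻¹(a)) σ(α^{k+2−m}(l₁₂), α^{k+1}(h₁)) ⊗ α^{1−m}(l₂)α(h₂) and φ^r((a ⊗ h) ⊗ l) = a σ(α^{k+1}(h₁), α^{k+1−m}(l₁)) ⊗ α(h₂)α^{1−m}(l₂). Then (A ♯_σ^× H, β ⊗ α, φ^l, φ^r) is a weak (H, α) Hom-bimodule: φ^l(1_H ⊗ x) = (β ⊗ α)(x) = φ^r(x ⊗ 1_H) and φ^l(α(l) ⊗ φ^r(x ⊗ g)) = φ^r(φ^l(l ⊗ x) ⊗ α(g)) for all l, g ∈ H and x ∈ A ⊗ H. -/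

import Mathlib

open TensorProduct

noncomputable section

/-- A monoidal Hom-algebra `(A, β)`. -/
structure HomAlgebraStr (K : Type*) (A : Type*) [Field K] [AddCommGroup A] [Module K A] where
  mul : A →ₗ[K] A →ₗ[K] A
  one : A
  str : A ≃ₗ[K] A
  hom_assoc : ∀ a b c : A, mul (str a) (mul b c) = mul (mul a b) (str c)
  str_mul : ∀ a b : A, str (mul a b) = mul (str a) (str b)
  mul_one : ∀ a : A, mul a one = str a
  one_mul : ∀ a : A, mul one a = str a
  str_one : str one = one

/-- A monoidal Hom-coalgebra `(C, γ)`. -/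
structure HomCoalgebraStr (K : Type*) (C : Type*) [Field K] [AddCommGroup C] [Module K C] where
  comul : C →ₗ[K] C ⊗[K] C
  counit : C →ₗ[K] K
  str : C ≃ₗ[K] C
  hom_coassoc : ∀ c : C,
    TensorProduct.map str.symm.toLinearMap comul (comul c)
      = TensorProduct.assoc K C C C (TensorProduct.map comul str.symm.toLinearMap (comul c))
  comul_str : ∀ c : C, comul (str c) = TensorProduct.map str.toLinearMap str.toLinearMap (comul c)
  counit_comul_left : ∀ c : C,
    TensorProduct.lid K C (TensorProduct.map counit (LinearMap.id : C →ₗ[K] C) (comul c)) = str.symm c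
  counit_comul_right : ∀ c : C,
    TensorProduct.rid K C (TensorProduct.map (LinearMap.id : C →ₗ[K] C) counit (comul c)) = str.symm c
  counit_str : ∀ c : C, counit (str c) = counit c

/-- The componentwise multiplication on `N ⊗ N` induced by a bilinear multiplication on `N`. -/
def tensorSquareMul {K N : Type*} [Field K] [AddCommGroup N] [Module K N]
    (mul : N →ₗ[K] N →ₗ[K] N) :
    (N ⊗[K] N) →ₗ[K] (N ⊗[K] N) →ₗ[K] (N ⊗[K] N) :=
  TensorProduct.curry
    ((TensorProduct.map (TensorProduct.lift mul) (TensorProduct.lift mul)) ∘ₗ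
      (TensorProduct.tensorTensorTensorComm K N N N N).toLinearMap)

/-- A monoidal Hom-bialgebra `(H, α)`. -/
structure HomBialgebraStr (K : Type*) (H : Type*) [Field K] [AddCommGroup H] [Module K H]
    extends HomAlgebraStr K H where
  comul : H →ₗ[K] H ⊗[K] H
  counit : H →ₗ[K] K
  hom_coassoc : ∀ c : H,
    TensorProduct.map str.symm.toLinearMap comul (comul c)
      = TensorProduct.assoc K H H H (TensorProduct.map comul str.symm.toLinearMap (comul c))
  comul_str : ∀ c : H, comul (str c) = TensorProduct.map str.toLinearMap str.toLinearMap (comul c)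
  counit_comul_left : ∀ c : H,
    TensorProduct.lid K H (TensorProduct.map counit (LinearMap.id : H →ₗ[K] H) (comul c)) = str.symm c
  counit_comul_right : ∀ c : H,
    TensorProduct.rid K H (TensorProduct.map (LinearMap.id : H →ₗ[K] H) counit (comul c)) = str.symm c
  counit_str : ∀ c : H, counit (str c) = counit c
  comul_mul : ∀ a b : H, comul (mul a b) = tensorSquareMul mul (comul a) (comul b)
  comul_one : comul one = one ⊗ₜ[K] one
  counit_mul : ∀ a b : H, counit (mul a b) = counit a * counit b
  counit_one : counit one = 1

/-- A monoidal Hom-Hopf algebra `(H, α, S)`. -/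
structure HomHopfStr (K : Type*) (H : Type*) [Field K] [AddCommGroup H] [Module K H]
    extends HomBialgebraStr K H where
  antipode : H →ₗ[K] H
  antipode_str : ∀ h : H, antipode (str h) = str (antipode h)
  antipode_mul_left : ∀ h : H,
    TensorProduct.lift (mul ∘ₗ antipode) (comul h) = counit h • one
  antipode_mul_right : ∀ h : H,
    TensorProduct.lift (mul.compl₂ antipode) (comul h) = counit h • one

section Defs

variable {K H A C M : Type*} [Field K]
variable [AddCommGroup H] [Module K H] [AddCommGroup A] [Module K A]
variable [AddCommGroup C] [Module K C] [AddCommGroup M] [Module K M]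

/-- `(A, β)` is a left weak `(H, α)`-Hom-module algebra via `act`:
`h·(ab) = (h₁·a)(h₂·b)` and `h·1 = ε(h)1`. -/
structure IsWeakModuleAlgebra (HB : HomBialgebraStr K H) (AA : HomAlgebraStr K A)
    (act : H →ₗ[K] A →ₗ[K] A) : Prop where
  act_mul : ∀ (h : H) (a b : A),
    act h (AA.mul a b)
      = TensorProduct.lift AA.mul
          (TensorProduct.map (TensorProduct.lift act) (TensorProduct.lift act)
            (TensorProduct.map ((TensorProduct.mk K H A).flip a) ((TensorProduct.mk K H A).flip b)
              (HB.comul h)))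
  act_one : ∀ h : H, act h AA.one = HB.counit h • AA.one

/-- `(C, β)` is a left `(H, α)`-Hom-comodule coalgebra via `coact a = a₍₋₁₎ ⊗ a₍₀₎`. -/
structure IsComoduleCoalgebra (HB : HomBialgebraStr K H) (CC : HomCoalgebraStr K C)
    (coact : C →ₗ[K] H ⊗[K] C) : Prop where
  comodule_coassoc : ∀ c : C,
    TensorProduct.assoc K H H C
        (TensorProduct.map HB.comul CC.str.symm.toLinearMap (coact c))
      = TensorProduct.map HB.str.symm.toLinearMap coact (coact c)
  coact_str : ∀ c : C,
    coact (CC.str c) = TensorProduct.map HB.str.toLinearMap CC.str.toLinearMap (coact c)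
  counit_coact : ∀ c : C,
    TensorProduct.lid K C (TensorProduct.map HB.counit (LinearMap.id : C →ₗ[K] C) (coact c))
      = CC.str.symm c
  coact_comul : ∀ c : C,
    TensorProduct.map (LinearMap.id : H →ₗ[K] H) CC.comul (coact c)
      = TensorProduct.map (TensorProduct.lift HB.mul) (LinearMap.id : C ⊗[K] C →ₗ[K] C ⊗[K] C)
          (TensorProduct.tensorTensorTensorComm K H C H C
            (TensorProduct.map coact coact (CC.comul c)))
  counit_coact_one : ∀ c : C,
    TensorProduct.rid K H (TensorProduct.map (LinearMap.id : H →ₗ[K] H) CC.counit (coact c))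
      = CC.counit c • HB.one

/-- The `(m,k)`-Hom-crossed product multiplication on simple tensors:
`(a ♯ h)(b ♯ g) = a[(α^m(h₁₁)·β⁻²(b)) σ(α^{k+1}(h₁₂), α^k(g₁))] ♯ α(h₂g₂)`. -/
def cpMulElem (HB : HomBialgebraStr K H) (AA : HomAlgebraStr K A)
    (act : H →ₗ[K] A →ₗ[K] A) (σ : H →ₗ[K] H →ₗ[K] A) (m k : ℤ)
    (a : A) (h : H) (b : A) (g : H) : A ⊗[K] H :=
  TensorProduct.map
    ((AA.mul a) ∘ₗ TensorProduct.lift AA.mul ∘ₗ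
      TensorProduct.map
        ((act.flip ((AA.str ^ (-2 : ℤ)) b)) ∘ₗ (HB.str ^ m).toLinearMap)
        (TensorProduct.lift σ ∘ₗ
          TensorProduct.map (HB.str ^ (k+1)).toLinearMap (HB.str ^ k).toLinearMap) ∘ₗ
      (TensorProduct.assoc K H H H).toLinearMap)
    (HB.str.toLinearMap ∘ₗ TensorProduct.lift HB.mul)
    (TensorProduct.map (TensorProduct.map HB.comul (LinearMap.id : H →ₗ[K] H))
      (LinearMap.id : H ⊗[K] H →ₗ[K] H ⊗[K] H)
      (TensorProduct.tensorTensorTensorComm K H H H H (HB.comul h ⊗ₜ[K] HB.comul g)))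

/-- The `m`-Hom-smash product multiplication on simple tensors:
`(a ♯ h)(b ♯ g) = a(α^m(h₁)·β⁻¹(b)) ♯ α(h₂)g`. -/
def smashMulElem (HB : HomBialgebraStr K H) (AA : HomAlgebraStr K A)
    (act : H →ₗ[K] A →ₗ[K] A) (m : ℤ) (a : A) (h : H) (b : A) (g : H) : A ⊗[K] H :=
  TensorProduct.map
    ((AA.mul a) ∘ₗ (act.flip ((AA.str ^ (-1 : ℤ)) b)) ∘ₗ (HB.str ^ m).toLinearMap)
    ((HB.mul.flip g) ∘ₗ HB.str.toLinearMap)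
    (HB.comul h)

/-- The `m`-Hom-smash coproduct comultiplication on simple tensors:
`Δ(a ⋊ h) = (a₁ ⋊ α^m(a₂₍₋₁₎)α⁻¹(h₁)) ⊗ (β(a₂₍₀₎) ⋊ h₂)`. -/
def scComulElem (HB : HomBialgebraStr K H) (AC : HomCoalgebraStr K A)
    (coact : A →ₗ[K] H ⊗[K] A) (m : ℤ) (a : A) (h : H) :
    (A ⊗[K] H) ⊗[K] (A ⊗[K] H) :=
  TensorProduct.map
    (TensorProduct.map (LinearMap.id : A →ₗ[K] A)
        (TensorProduct.lift HB.mul ∘ₗ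
          TensorProduct.map (HB.str ^ m).toLinearMap (HB.str ^ (-1 : ℤ)).toLinearMap) ∘ₗ
      (TensorProduct.assoc K A H H).toLinearMap)
    (TensorProduct.map AC.str.toLinearMap (LinearMap.id : H →ₗ[K] H))
    (TensorProduct.tensorTensorTensorComm K (A ⊗[K] H) A H H
      ((TensorProduct.assoc K A H A).symm
          (TensorProduct.map (LinearMap.id : A →ₗ[K] A) coact (AC.comul a)) ⊗ₜ[K] HB.comul h))

/-- Condition (1) of Theorem 2.3. -/
def CPCond1 (HB : HomBialgebraStr K H) (AA : HomAlgebraStr K A)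
    (σ : H →ₗ[K] H →ₗ[K] A) : Prop :=
  (∀ h : H, σ h HB.one = HB.counit h • AA.one) ∧
  (∀ h : H, σ HB.one h = HB.counit h • AA.one) ∧
  (∀ h g : H, σ (HB.str h) (HB.str g) = AA.str (σ h g))

/-- Condition (2) of Theorem 2.3:
`[α^m(h₁l₁)·a] σ(α^{k+2}(h₂), α^{k+2}(l₂)) = σ(α^{k+2}(h₁), α^{k+2}(l₁)) [α^m(h₂l₂)·a]`. -/
def CPCond2 (HB : HomBialgebraStr K H) (AA : HomAlgebraStr K A)
    (act : H →ₗ[K] A →ₗ[K] A) (σ : H →ₗ[K] H →ₗ[K] A) (m k : ℤ) : Prop :=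
  ∀ (h l : H) (a : A),
    TensorProduct.lift AA.mul
      (TensorProduct.map
        ((act.flip a) ∘ₗ (HB.str ^ m).toLinearMap ∘ₗ TensorProduct.lift HB.mul)
        (TensorProduct.lift σ ∘ₗ
          TensorProduct.map (HB.str ^ (k+2)).toLinearMap (HB.str ^ (k+2)).toLinearMap)
        (TensorProduct.tensorTensorTensorComm K H H H H (HB.comul h ⊗ₜ[K] HB.comul l)))
    =
    TensorProduct.lift AA.mul
      (TensorProduct.map
        (TensorProduct.lift σ ∘ₗ
          TensorProduct.map (HB.str ^ (k+2)).toLinearMap (HB.str ^ (k+2)).toLinearMap)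
        ((act.flip a) ∘ₗ (HB.str ^ m).toLinearMap ∘ₗ TensorProduct.lift HB.mul)
        (TensorProduct.tensorTensorTensorComm K H H H H (HB.comul h ⊗ₜ[K] HB.comul l)))

/-- Condition (3) of Theorem 2.3:
`[α^{m+1}(h₁)·σ(α^{k+1}(l₁), α^{k+1}(g₁))] σ(α^{k+2}(h₂), α^{k+1}(l₂g₂))
  = σ(α^{k+2}(h₁), α^{k+2}(l₁)) σ(α^{k+1}(h₂l₂), α^{k+1}(g))`. -/
def CPCond3 (HB : HomBialgebraStr K H) (AA : HomAlgebraStr K A)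
    (act : H →ₗ[K] A →ₗ[K] A) (σ : H →ₗ[K] H →ₗ[K] A) (m k : ℤ) : Prop :=
  ∀ h l g : H,
    TensorProduct.lift AA.mul
      (TensorProduct.map
        (TensorProduct.lift act ∘ₗ
          TensorProduct.map (HB.str ^ (m+1)).toLinearMap
            (TensorProduct.lift σ ∘ₗ
              TensorProduct.map (HB.str ^ (k+1)).toLinearMap (HB.str ^ (k+1)).toLinearMap))
        (TensorProduct.lift σ ∘ₗ
          TensorProduct.map (HB.str ^ (k+2)).toLinearMap
            ((HB.str ^ (k+1)).toLinearMap ∘ₗ TensorProduct.lift HB.mul))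
        (TensorProduct.tensorTensorTensorComm K H H (H ⊗[K] H) (H ⊗[K] H)
          (HB.comul h ⊗ₜ[K]
            (TensorProduct.tensorTensorTensorComm K H H H H (HB.comul l ⊗ₜ[K] HB.comul g)))))
    =
    TensorProduct.lift AA.mul
      (TensorProduct.map
        (TensorProduct.lift σ ∘ₗ
          TensorProduct.map (HB.str ^ (k+2)).toLinearMap (HB.str ^ (k+2)).toLinearMap)
        ((σ.flip ((HB.str ^ (k+1)) g)) ∘ₗ (HB.str ^ (k+1)).toLinearMap ∘ₗ TensorProduct.lift HB.mul)
        (TensorProduct.tensorTensorTensorComm K H H H H (HB.comul h ⊗ₜ[K] HB.comul l)))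

/-- `σ` is a twisted comodule cocycle:
`β(a₁) ⊗ α^{m+1}(a₂₍₋₁₎)g ⊗ a₂₍₀₎
  = a₁σ(α^{k+m+2}(a₂₍₋₁₎₁), α^{k+1}(g₁)) ⊗ α^{m+2}(a₂₍₋₁₎₂)α(g₂) ⊗ a₂₍₀₎`. -/
def IsTwistedCocycle (HB : HomBialgebraStr K H) (AA : HomAlgebraStr K A)
    (AC : HomCoalgebraStr K A) (coact : A →ₗ[K] H ⊗[K] A)
    (σ : H →ₗ[K] H →ₗ[K] A) (m k : ℤ) : Prop :=
  ∀ (a : A) (g : H),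
    (TensorProduct.assoc K A H A).symm
      (TensorProduct.map AA.str.toLinearMap
        (TensorProduct.map ((HB.mul.flip g) ∘ₗ (HB.str ^ (m+1)).toLinearMap)
          (LinearMap.id : A →ₗ[K] A))
        (TensorProduct.map (LinearMap.id : A →ₗ[K] A) coact (AC.comul a)))
    =
    TensorProduct.map
      (TensorProduct.map (TensorProduct.lift AA.mul) (LinearMap.id : H →ₗ[K] H)
        ∘ₗ (TensorProduct.assoc K A A H).symm.toLinearMap
        ∘ₗ TensorProduct.map (LinearMap.id : A →ₗ[K] A)
            (TensorProduct.map
              (TensorProduct.lift σ ∘ₗ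
                TensorProduct.map (HB.str ^ (k+m+2)).toLinearMap (HB.str ^ (k+1)).toLinearMap)
              (TensorProduct.lift HB.mul ∘ₗ
                TensorProduct.map (HB.str ^ (m+2)).toLinearMap HB.str.toLinearMap)
            ∘ₗ (TensorProduct.tensorTensorTensorComm K H H H H).toLinearMap)
        ∘ₗ (TensorProduct.assoc K A (H ⊗[K] H) (H ⊗[K] H)).toLinearMap)
      (LinearMap.id : A →ₗ[K] A)
      ((TensorProduct.assoc K (A ⊗[K] (H ⊗[K] H)) (H ⊗[K] H) A).symm
        (TensorProduct.map (LinearMap.id : A ⊗[K] (H ⊗[K] H) →ₗ[K] A ⊗[K] (H ⊗[K] H))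
          (TensorProduct.comm K A (H ⊗[K] H)).toLinearMap
          (TensorProduct.assoc K (A ⊗[K] (H ⊗[K] H)) A (H ⊗[K] H)
            ((TensorProduct.assoc K A (H ⊗[K] H) A).symm
                (TensorProduct.map (LinearMap.id : A →ₗ[K] A)
                  (TensorProduct.map HB.comul (LinearMap.id : A →ₗ[K] A))
                  (TensorProduct.map (LinearMap.id : A →ₗ[K] A) coact (AC.comul a)))
              ⊗ₜ[K] HB.comul g))))

/-- Auxiliary map `(n ⊗ w) ⊗ t ↦ (α^j(n)·t) ⊗ f(w)` on `(H ⊗ M) ⊗ H`. -/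
def coactMulAux (HB : HomBialgebraStr K H) (j : ℤ) (f : M →ₗ[K] M) :
    (H ⊗[K] M) ⊗[K] H →ₗ[K] H ⊗[K] M :=
  TensorProduct.map
      (TensorProduct.lift HB.mul ∘ₗ
        TensorProduct.map (HB.str ^ j).toLinearMap (LinearMap.id : H →ₗ[K] H)) f
    ∘ₗ (TensorProduct.assoc K H H M).symm.toLinearMap
    ∘ₗ TensorProduct.map (LinearMap.id : H →ₗ[K] H) (TensorProduct.comm K M H).toLinearMap
    ∘ₗ (TensorProduct.assoc K H M H).toLinearMap

/-- (A1): `ε_A` is an algebra map. -/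
def CondA1 (AA : HomAlgebraStr K A) (AC : HomCoalgebraStr K A) : Prop :=
  (∀ a b : A, AC.counit (AA.mul a b) = AC.counit a * AC.counit b) ∧ AC.counit AA.one = 1

/-- (A2): `ε_A(h·a) = ε_H(h)ε_A(a)`. -/
def CondA2 (HB : HomBialgebraStr K H) (AC : HomCoalgebraStr K A)
    (act : H →ₗ[K] A →ₗ[K] A) : Prop :=
  ∀ (h : H) (a : A), AC.counit (act h a) = HB.counit h * AC.counit a

/-- (A3): `σ` is a coalgebra map. -/
def CondA3 (HB : HomBialgebraStr K H) (AC : HomCoalgebraStr K A)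
    (σ : H →ₗ[K] H →ₗ[K] A) : Prop :=
  (∀ h g : H,
    AC.comul (σ h g)
      = TensorProduct.map (TensorProduct.lift σ) (TensorProduct.lift σ)
          (TensorProduct.tensorTensorTensorComm K H H H H (HB.comul h ⊗ₜ[K] HB.comul g))) ∧
  (∀ h g : H, AC.counit (σ h g) = HB.counit h * HB.counit g)

/-- (A4): `Δ_A(1_A) = 1_A ⊗ 1_A`. -/
def CondA4 (AA : HomAlgebraStr K A) (AC : HomCoalgebraStr K A) : Prop :=
  AC.comul AA.one = AA.one ⊗ₜ[K] AA.one

/-- (A5): the coaction is an algebra map. -/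
def CondA5 (HB : HomBialgebraStr K H) (AA : HomAlgebraStr K A)
    (coact : A →ₗ[K] H ⊗[K] A) : Prop :=
  (∀ a b : A,
    coact (AA.mul a b)
      = TensorProduct.map (TensorProduct.lift HB.mul) (TensorProduct.lift AA.mul)
          (TensorProduct.tensorTensorTensorComm K H A H A (coact a ⊗ₜ[K] coact b))) ∧
  coact AA.one = HB.one ⊗ₜ[K] AA.one

/-- (A6). -/
def CondA6 (HB : HomBialgebraStr K H) (coact : A →ₗ[K] H ⊗[K] A)
    (σ : H →ₗ[K] H →ₗ[K] A) (m k : ℤ) : Prop :=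
  ∀ h g : H,
    coactMulAux HB (m-1) (LinearMap.id : A →ₗ[K] A)
      (TensorProduct.map
        (coact ∘ₗ TensorProduct.lift σ ∘ₗ
          TensorProduct.map (HB.str ^ (k+2)).toLinearMap (HB.str ^ (k+2)).toLinearMap)
        ((HB.str ^ (-1 : ℤ)).toLinearMap ∘ₗ TensorProduct.lift HB.mul)
        (TensorProduct.tensorTensorTensorComm K H H H H (HB.comul h ⊗ₜ[K] HB.comul g)))
    =
    TensorProduct.map (TensorProduct.lift HB.mul)
      (TensorProduct.lift σ ∘ₗ
        TensorProduct.map (HB.str ^ (k+1)).toLinearMap (HB.str ^ (k+1)).toLinearMap)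
      (TensorProduct.tensorTensorTensorComm K H H H H (HB.comul h ⊗ₜ[K] HB.comul g))

/-- (A7). -/
def CondA7 (HB : HomBialgebraStr K H) (AA : HomAlgebraStr K A) (AC : HomCoalgebraStr K A)
    (act : H →ₗ[K] A →ₗ[K] A) (coact : A →ₗ[K] H ⊗[K] A)
    (σ : H →ₗ[K] H →ₗ[K] A) (m k : ℤ) : Prop :=
  ∀ a b : A,
    AC.comul (AA.mul a b) =
      TensorProduct.map
        (TensorProduct.lift AA.mul
          ∘ₗ TensorProduct.map (LinearMap.id : A →ₗ[K] A)
              (TensorProduct.lift AA.mul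
                ∘ₗ TensorProduct.map
                    (TensorProduct.lift act ∘ₗ
                      TensorProduct.map (HB.str ^ (2*m)).toLinearMap (AA.str ^ (-2 : ℤ)).toLinearMap)
                    (TensorProduct.lift σ ∘ₗ
                      TensorProduct.map (HB.str ^ (k+m+1)).toLinearMap (HB.str ^ (k+m)).toLinearMap)
                ∘ₗ (TensorProduct.tensorTensorTensorComm K H H A H).toLinearMap)
          ∘ₗ (TensorProduct.assoc K A (H ⊗[K] H) (A ⊗[K] H)).toLinearMap)
        (AA.str.toLinearMap ∘ₗ TensorProduct.lift AA.mul)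
        (TensorProduct.tensorTensorTensorComm K (A ⊗[K] (H ⊗[K] H)) A (A ⊗[K] H) A
          ((TensorProduct.assoc K A (H ⊗[K] H) A).symm
              (TensorProduct.map (LinearMap.id : A →ₗ[K] A)
                (TensorProduct.map HB.comul (LinearMap.id : A →ₗ[K] A))
                (TensorProduct.map (LinearMap.id : A →ₗ[K] A) coact (AC.comul a)))
            ⊗ₜ[K]
            (TensorProduct.assoc K A H A).symm
              (TensorProduct.map (LinearMap.id : A →ₗ[K] A) coact (AC.comul b))))

/-- (A8). -/
def CondA8 (HB : HomBialgebraStr K H) (AA : HomAlgebraStr K A) (AC : HomCoalgebraStr K A)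
    (act : H →ₗ[K] A →ₗ[K] A) (coact : A →ₗ[K] H ⊗[K] A)
    (σ : H →ₗ[K] H →ₗ[K] A) (m k : ℤ) : Prop :=
  ∀ (h : H) (b : A),
    AC.comul (act ((HB.str ^ m) h) b) =
      TensorProduct.map
        (TensorProduct.lift AA.mul
          ∘ₗ TensorProduct.map
              (TensorProduct.lift act ∘ₗ
                TensorProduct.map (HB.str ^ m).toLinearMap (AA.str ^ (-1 : ℤ)).toLinearMap)
              (TensorProduct.lift σ ∘ₗ
                TensorProduct.map (HB.str ^ (k+1)).toLinearMap (HB.str ^ (k+m+1)).toLinearMap)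
          ∘ₗ (TensorProduct.tensorTensorTensorComm K H H A H).toLinearMap)
        (TensorProduct.lift act ∘ₗ
          TensorProduct.map (HB.str ^ m).toLinearMap AA.str.toLinearMap)
        (TensorProduct.tensorTensorTensorComm K (H ⊗[K] H) H (A ⊗[K] H) A
          (TensorProduct.map HB.comul (LinearMap.id : H →ₗ[K] H) (HB.comul h)
            ⊗ₜ[K]
            (TensorProduct.assoc K A H A).symm
              (TensorProduct.map (LinearMap.id : A →ₗ[K] A) coact (AC.comul b))))

/-- (A9). -/
def CondA9 (HB : HomBialgebraStr K H) (act : H →ₗ[K] A →ₗ[K] A)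
    (coact : A →ₗ[K] H ⊗[K] A) (m : ℤ) : Prop :=
  ∀ (h : H) (b : A),
    coactMulAux HB (m-1) (LinearMap.id : A →ₗ[K] A)
      (TensorProduct.map (coact ∘ₗ (act.flip b) ∘ₗ (HB.str ^ (m+1)).toLinearMap)
        (LinearMap.id : H →ₗ[K] H) (HB.comul h))
    =
    TensorProduct.map
      (TensorProduct.lift HB.mul ∘ₗ
        TensorProduct.map (LinearMap.id : H →ₗ[K] H) (HB.str ^ m).toLinearMap)
      (TensorProduct.lift act ∘ₗ
        TensorProduct.map (HB.str ^ m).toLinearMap (LinearMap.id : A →ₗ[K] A))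
      (TensorProduct.tensorTensorTensorComm K H H H A (HB.comul h ⊗ₜ[K] coact b))

/-- The Radford `[(m,k),m]`-biproduct structure on `A ⊗ H`. -/
structure IsRadfordBiproduct (HB : HomBialgebraStr K H) (AA : HomAlgebraStr K A)
    (AC : HomCoalgebraStr K A) (act : H →ₗ[K] A →ₗ[K] A) (coact : A →ₗ[K] H ⊗[K] A)
    (σ : H →ₗ[K] H →ₗ[K] A) (m k : ℤ) (B : HomBialgebraStr K (A ⊗[K] H)) : Prop where
  mul_def : ∀ (a : A) (h : H) (b : A) (g : H),
    B.mul (a ⊗ₜ[K] h) (b ⊗ₜ[K] g) = cpMulElem HB AA act σ m k a h b g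
  one_def : B.one = AA.one ⊗ₜ[K] HB.one
  comul_def : ∀ (a : A) (h : H), B.comul (a ⊗ₜ[K] h) = scComulElem HB AC coact m a h
  counit_def : ∀ (a : A) (h : H), B.counit (a ⊗ₜ[K] h) = AC.counit a * HB.counit h
  str_def : B.str = TensorProduct.congr AA.str HB.str

/-- `S_H` is a `σ`-antipode for `(H, α)`. -/
structure IsSigmaAntipode (HB : HomBialgebraStr K H) (AA : HomAlgebraStr K A)
    (σ : H →ₗ[K] H →ₗ[K] A) (S : H →ₗ[K] H) : Prop where
  antipode_str : ∀ h : H, S (HB.str h) = HB.str (S h)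
  right : ∀ h : H,
    TensorProduct.map (TensorProduct.lift σ) (TensorProduct.lift HB.mul)
        (TensorProduct.tensorTensorTensorComm K H H H H
          (TensorProduct.map HB.comul (HB.comul ∘ₗ S) (HB.comul h)))
      = HB.counit h • (AA.one ⊗ₜ[K] HB.one)
  left : ∀ h : H,
    TensorProduct.map (TensorProduct.lift σ) (TensorProduct.lift HB.mul)
        (TensorProduct.tensorTensorTensorComm K H H H H
          (TensorProduct.map (HB.comul ∘ₗ S) HB.comul (HB.comul h)))
      = HB.counit h • (AA.one ⊗ₜ[K] HB.one)

/-- `S_A` is a convolution inverse of `id_A`. -/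
def IsConvInvOfId (AA : HomAlgebraStr K A) (AC : HomCoalgebraStr K A)
    (SA : A →ₗ[K] A) : Prop :=
  (∀ a : A, TensorProduct.lift (AA.mul ∘ₗ SA) (AC.comul a) = AC.counit a • AA.one) ∧
  (∀ a : A, TensorProduct.lift (AA.mul.compl₂ SA) (AC.comul a) = AC.counit a • AA.one)

/-- `σ` and `σinv` are convolution inverses of each other. -/
def IsConvInvPair (HB : HomBialgebraStr K H) (AA : HomAlgebraStr K A)
    (σ σinv : H →ₗ[K] H →ₗ[K] A) : Prop :=
  (∀ h g : H,
    TensorProduct.lift AA.mul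
      (TensorProduct.map (TensorProduct.lift σ) (TensorProduct.lift σinv)
        (TensorProduct.tensorTensorTensorComm K H H H H (HB.comul h ⊗ₜ[K] HB.comul g)))
    = (HB.counit h * HB.counit g) • AA.one) ∧
  (∀ h g : H,
    TensorProduct.lift AA.mul
      (TensorProduct.map (TensorProduct.lift σinv) (TensorProduct.lift σ)
        (TensorProduct.tensorTensorTensorComm K H H H H (HB.comul h ⊗ₜ[K] HB.comul g)))
    = (HB.counit h * HB.counit g) • AA.one)

/-- The Radford antipode formula
`S(a ⊗ h) = (1_A ⊗ S_H(α^{m−1}(a₍₋₁₎)α⁻²(h)))·(S_A(a₍₀₎) ⊗ 1_H)`. -/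
def radfordAntipodeElem (HB : HomBialgebraStr K H) (AA : HomAlgebraStr K A)
    (coact : A →ₗ[K] H ⊗[K] A)
    (Bmul : (A ⊗[K] H) →ₗ[K] (A ⊗[K] H) →ₗ[K] (A ⊗[K] H))
    (SH : H →ₗ[K] H) (SA : A →ₗ[K] A) (m : ℤ) (a : A) (h : H) : A ⊗[K] H :=
  TensorProduct.lift Bmul
    (TensorProduct.map
      ((TensorProduct.mk K A H AA.one) ∘ₗ SH ∘ₗ (HB.mul.flip ((HB.str ^ (-2 : ℤ)) h)) ∘ₗ
        (HB.str ^ (m - 1)).toLinearMap)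
      (((TensorProduct.mk K A H).flip HB.one) ∘ₗ SA)
      (coact a))

/-- `φ^l(l ⊗ (a ⊗ h)) = (α(l₁₁)·β⁻¹(a)) σ(α^{k+2−m}(l₁₂), α^{k+1}(h₁)) ⊗ α^{1−m}(l₂)α(h₂)`. -/
def philElem (HB : HomBialgebraStr K H) (AA : HomAlgebraStr K A)
    (act : H →ₗ[K] A →ₗ[K] A) (σ : H →ₗ[K] H →ₗ[K] A) (m k : ℤ)
    (l : H) (a : A) (h : H) : A ⊗[K] H :=
  TensorProduct.map
    (TensorProduct.lift AA.mul ∘ₗ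
      TensorProduct.map ((act.flip ((AA.str ^ (-1 : ℤ)) a)) ∘ₗ HB.str.toLinearMap)
        (TensorProduct.lift σ ∘ₗ
          TensorProduct.map (HB.str ^ (k+2-m)).toLinearMap (HB.str ^ (k+1)).toLinearMap) ∘ₗ
      (TensorProduct.assoc K H H H).toLinearMap)
    (TensorProduct.lift HB.mul ∘ₗ
      TensorProduct.map (HB.str ^ (1-m)).toLinearMap HB.str.toLinearMap)
    (TensorProduct.map (TensorProduct.map HB.comul (LinearMap.id : H →ₗ[K] H))
      (LinearMap.id : H ⊗[K] H →ₗ[K] H ⊗[K] H)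
      (TensorProduct.tensorTensorTensorComm K H H H H (HB.comul l ⊗ₜ[K] HB.comul h)))

/-- `φ^r((a ⊗ h) ⊗ l) = a σ(α^{k+1}(h₁), α^{k+1−m}(l₁)) ⊗ α(h₂)α^{1−m}(l₂)`. -/
def phirElem (HB : HomBialgebraStr K H) (AA : HomAlgebraStr K A)
    (σ : H →ₗ[K] H →ₗ[K] A) (m k : ℤ) (a : A) (h : H) (l : H) : A ⊗[K] H :=
  TensorProduct.map
    ((AA.mul a) ∘ₗ TensorProduct.lift σ ∘ₗ
      TensorProduct.map (HB.str ^ (k+1)).toLinearMap (HB.str ^ (k+1-m)).toLinearMap)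
    (TensorProduct.lift HB.mul ∘ₗ
      TensorProduct.map HB.str.toLinearMap (HB.str ^ (1-m)).toLinearMap)
    (TensorProduct.tensorTensorTensorComm K H H H H (HB.comul h ⊗ₜ[K] HB.comul l))

/-- `(M, μ, φ)` is a left `(H, α, σ̄)`-Hom module. -/
def IsLeftSigmaHomModule (HB : HomBialgebraStr K H)
    (mulM : M →ₗ[K] M →ₗ[K] M) (strM : M →ₗ[K] M)
    (σbar : H →ₗ[K] H →ₗ[K] M) (φ : H →ₗ[K] M →ₗ[K] M) : Prop :=
  (∀ (g l : H) (x : M),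
    φ (HB.str g) (φ l x)
      = TensorProduct.lift mulM
          (TensorProduct.map (strM ∘ₗ TensorProduct.lift σbar)
            ((φ.flip x) ∘ₗ TensorProduct.lift HB.mul)
            (TensorProduct.tensorTensorTensorComm K H H H H (HB.comul g ⊗ₜ[K] HB.comul l))))
  ∧ (∀ x : M, φ HB.one x = strM x)

/-- `(M, μ, φ)` is a right `(H, α, σ̄)`-Hom module. -/
def IsRightSigmaHomModule (HB : HomBialgebraStr K H)
    (mulM : M →ₗ[K] M →ₗ[K] M) (strM : M →ₗ[K] M)
    (σbar : H →ₗ[K] H →ₗ[K] M) (φ : M →ₗ[K] H →ₗ[K] M) : Prop :=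
  (∀ (x : M) (l g : H),
    φ (φ x l) (HB.str g)
      = mulM (strM x)
          (TensorProduct.lift φ
            (TensorProduct.map (TensorProduct.lift σbar) (TensorProduct.lift HB.mul)
              (TensorProduct.tensorTensorTensorComm K H H H H (HB.comul l ⊗ₜ[K] HB.comul g)))))
  ∧ (∀ x : M, φ x HB.one = strM x)

/-- `(M, μ, φ⁺, φ⁻)` is a weak `(H, α)` Hom-bimodule. -/
def IsWeakHomBimodule (HB : HomBialgebraStr K H) (strM : M →ₗ[K] M)
    (φl : H →ₗ[K] M →ₗ[K] M) (φr : M →ₗ[K] H →ₗ[K] M) : Prop :=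
  (∀ x : M, φl HB.one x = strM x) ∧ (∀ x : M, φr x HB.one = strM x) ∧
  (∀ (h : H) (x : M) (g : H), φl (HB.str h) (φr x g) = φr (φl h x) (HB.str g))

/-- A weak `m`-Hom admissible mapping system `C ⇄ A ⇄ H`. -/
structure WeakAdmissibleSystem (HB : HomBialgebraStr K H)
    (CA : HomAlgebraStr K C) (CC : HomCoalgebraStr K C)
    (coact : C →ₗ[K] H ⊗[K] C) (m : ℤ) (AB : HomBialgebraStr K A)
    (j : C →ₗ[K] A) (p : A →ₗ[K] C) (i : H →ₗ[K] A) (π : A →ₗ[K] H) : Prop where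
  c_str_eq : CA.str = CC.str
  p_j : ∀ c : C, p (j c) = c
  pi_i : ∀ h : H, π (i h) = h
  pi_mul : ∀ a b : A, π (AB.mul a b) = HB.mul (π a) (π b)
  pi_one : π AB.one = HB.one
  pi_str : ∀ a : A, π (AB.str a) = HB.str (π a)
  pi_comul : ∀ a : A, TensorProduct.map π π (AB.comul a) = HB.comul (π a)
  pi_counit : ∀ a : A, HB.counit (π a) = AB.counit a
  i_one : i HB.one = AB.one
  i_str : ∀ h : H, i (HB.str h) = AB.str (i h)
  i_comul : ∀ h : H, TensorProduct.map i i (HB.comul h) = AB.comul (i h)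
  i_counit : ∀ h : H, AB.counit (i h) = HB.counit h
  p_str : ∀ a : A, p (AB.str a) = CC.str (p a)
  p_comul : ∀ a : A, TensorProduct.map p p (AB.comul a) = CC.comul (p a)
  p_counit : ∀ a : A, CC.counit (p a) = AB.counit a
  j_mul : ∀ c d : C, j (CA.mul c d) = AB.mul (j c) (j d)
  j_one : j CA.one = AB.one
  j_str : ∀ c : C, j (CC.str c) = AB.str (j c)
  p_left_act : ∀ (h : H) (a : A),
    p (AB.mul (i ((HB.str ^ (-m)) h)) a) = HB.counit h • CC.str (p a)
  p_right_act : ∀ (a : A) (h : H),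
    p (AB.mul a (i ((HB.str ^ (-m)) h))) = HB.counit h • CC.str (p a)
  sigma_mod : ∃ σbar : H →ₗ[K] H →ₗ[K] A,
    IsLeftSigmaHomModule HB AB.mul AB.str.toLinearMap σbar
        (AB.mul ∘ₗ i ∘ₗ (HB.str ^ (-m)).toLinearMap)
      ∧ IsRightSigmaHomModule HB AB.mul AB.str.toLinearMap σbar
        (AB.mul.compl₂ (i ∘ₗ (HB.str ^ (-m)).toLinearMap))
  sub_l : ∀ c : C, ∃ y : H ⊗[K] C,
    TensorProduct.map ((HB.str ^ (-m)).toLinearMap ∘ₗ π) (LinearMap.id : A →ₗ[K] A)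
        (AB.comul (j c))
      = TensorProduct.map (LinearMap.id : H →ₗ[K] H) j y
  sub_r : ∀ c : C, ∃ z : C ⊗[K] H,
    TensorProduct.map (LinearMap.id : A →ₗ[K] A) ((HB.str ^ (-m)).toLinearMap ∘ₗ π)
        (AB.comul (j c))
      = TensorProduct.map j (LinearMap.id : H →ₗ[K] H) z
  p_col : ∀ c : C,
    TensorProduct.map (LinearMap.id : H →ₗ[K] H) p
        (TensorProduct.map ((HB.str ^ (-m)).toLinearMap ∘ₗ π) (LinearMap.id : A →ₗ[K] A)
          (AB.comul (j c)))
      = coact c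
  p_cor : ∀ c : C,
    TensorProduct.map p (LinearMap.id : H →ₗ[K] H)
        (TensorProduct.map (LinearMap.id : A →ₗ[K] A) ((HB.str ^ (-m)).toLinearMap ∘ₗ π)
          (AB.comul (j c)))
      = CC.str.symm c ⊗ₜ[K] HB.one
  split : ∀ a : A,
    TensorProduct.lift AB.mul (TensorProduct.map (j ∘ₗ p) (i ∘ₗ π) (AB.comul a)) = a

/-- The map `f : C ♯ H → A`, `c ⊗ h ↦ γ⁻¹(j(c)i(h))`. -/
def admF (AB : HomBialgebraStr K A) (j : C →ₗ[K] A) (i : H →ₗ[K] A) :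
    C ⊗[K] H →ₗ[K] A :=
  AB.str.symm.toLinearMap ∘ₗ TensorProduct.lift ((AB.mul ∘ₗ j).compl₂ i)

/-- The map `g : A → C ♯ H`, `a ↦ β(p(a₁)) ⊗ α(π(a₂))`. -/
def admG (HB : HomBialgebraStr K H) (CC : HomCoalgebraStr K C)
    (AB : HomBialgebraStr K A) (p : A →ₗ[K] C) (π : A →ₗ[K] H) :
    A →ₗ[K] C ⊗[K] H :=
  TensorProduct.map (CC.str.toLinearMap ∘ₗ p) (HB.str.toLinearMap ∘ₗ π) ∘ₗ AB.comul

end Defs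

/-! Both actions are multiplications inside the biproduct: with `ι l = 1 ♯ α^{-m}(l)` one has
`φ^l(l ⊗ x) = ι(l) x` and `φ^r(x ⊗ l) = x ι(l)`. Since `ι` is unital and intertwines `α` with
`β ⊗ α`, the unit axioms and the bimodule compatibility are the unit laws and the
Hom-associativity of the biproduct.

Identifying `φ^l` and `φ^r` with these products needs `β(h·a) = α(h)·β(a)`,
`β(σ(h, g)) = σ(α(h), α(g))` and `σ(h, 1) = ε(h)1`. These are forced by the biproduct being a
monoidal Hom-bialgebra: apply `id ⊗ ε` to its right unit law and to the multiplicativity of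
`β ⊗ α` on the products `(1 ♯ h)(1 ♯ g)` and `(1 ♯ h)(b ♯ 1)`. -/

namespace LinearEquiv

variable {R M : Type*} [CommSemiring R] [AddCommMonoid M] [Module R M]

theorem zpow_apply_zpow_apply (e : M ≃ₗ[R] M) (a b : ℤ) (x : M) :
    (e ^ a) ((e ^ b) x) = (e ^ (a + b)) x := by
  rw [zpow_add, mul_apply]

theorem zpow_apply_apply (e : M ≃ₗ[R] M) (n : ℤ) (x : M) : (e ^ n) (e x) = (e ^ (n + 1)) x := by
  rw [zpow_add_one, mul_apply]

theorem apply_zpow_apply (e : M ≃ₗ[R] M) (n : ℤ) (x : M) : e ((e ^ n) x) = (e ^ (n + 1)) x := by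
  rw [← zpow_apply_apply, ← mul_apply, ← mul_apply, (Commute.self_zpow e n).eq]

theorem zpow_apply_symm_apply (e : M ≃ₗ[R] M) (n : ℤ) (x : M) :
    (e ^ n) (e.symm x) = (e ^ (n - 1)) x := by
  rw [zpow_sub_one, mul_apply, coe_inv]

theorem zpow_apply_eq_self {e : M ≃ₗ[R] M} {x : M} (he : e x = x) (n : ℤ) : (e ^ n) x = x :=
  (MulAction.stabilizer _ x).zpow_mem (show e • x = x from he) n

end LinearEquiv

theorem LinearMap.map_zpow_apply_of_semiconj {R M N : Type*} [CommSemiring R] [AddCommMonoid M]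
    [Module R M] [AddCommMonoid N] [Module R N] (f : M →ₗ[R] N) {e : M ≃ₗ[R] M}
    {e' : N ≃ₗ[R] N} (h : ∀ x, f (e x) = e' (f x)) (n : ℤ) (x : M) :
    f ((e ^ n) x) = (e' ^ n) (f x) := by
  have h_symm (x : M) : f (e.symm x) = e'.symm (f x) := by
    rw [e'.eq_symm_apply, ← h, e.apply_symm_apply]
  induction n using Int.induction_on generalizing x with
  | zero => rfl
  | succ n ih =>
    rw [zpow_add_one, zpow_add_one, LinearEquiv.mul_apply, LinearEquiv.mul_apply, ih, h]
  | pred n ih =>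
    rw [zpow_sub_one, zpow_sub_one, LinearEquiv.mul_apply, LinearEquiv.mul_apply,
      LinearEquiv.coe_inv, LinearEquiv.coe_inv, ih, h_symm]

namespace HomBialgebraStr

variable {K H M : Type*} [Field K] [AddCommGroup H] [Module K H] [AddCommGroup M] [Module K M]
  (HB : HomBialgebraStr K H)

theorem str_zpow_one (n : ℤ) : (HB.str ^ n) HB.one = HB.one :=
  LinearEquiv.zpow_apply_eq_self HB.str_one n

theorem counit_str_zpow (n : ℤ) (h : H) : HB.counit ((HB.str ^ n) h) = HB.counit h := by
  simpa using HB.counit.map_zpow_apply_of_semiconj (e' := 1) HB.counit_str n h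

theorem comul_str_zpow (n : ℤ) (h : H) :
    HB.comul ((HB.str ^ n) h) =
      map (HB.str ^ n).toLinearMap (HB.str ^ n).toLinearMap (HB.comul h) := by
  rw [HB.comul.map_zpow_apply_of_semiconj (e' := congr HB.str HB.str) HB.comul_str, congr_zpow]
  rfl

theorem comul_str_symm (h : H) :
    HB.comul (HB.str.symm h) =
      map HB.str.symm.toLinearMap HB.str.symm.toLinearMap (HB.comul h) := by
  conv_rhs => rw [← HB.str.apply_symm_apply h, HB.comul_str, map_map]
  simp

theorem rid_map_counit_comul (f : H →ₗ[K] M) (h : H) :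
    TensorProduct.rid K M (map f HB.counit (HB.comul h)) = f (HB.str.symm h) := by
  rw [← HB.counit_comul_right h]
  induction HB.comul h using TensorProduct.induction_on with
  | zero => simp
  | add p q hp hq => simp [hp, hq]
  | tmul x y => simp

theorem lid_map_counit_comul (f : H →ₗ[K] M) (h : H) :
    TensorProduct.lid K M (map HB.counit f (HB.comul h)) = f (HB.str.symm h) := by
  rw [← HB.counit_comul_left h]
  induction HB.comul h using TensorProduct.induction_on with
  | zero => simp
  | add p q hp hq => simp [hp, hq]
  | tmul x y => simp

theorem rid_map_counit_mul (F : H ⊗[K] H →ₗ[K] M) (h g : H) :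
    TensorProduct.rid K M (map F (HB.counit ∘ₗ lift HB.mul)
      (tensorTensorTensorComm K H H H H (HB.comul h ⊗ₜ HB.comul g))) =
      F (HB.str.symm h ⊗ₜ HB.str.symm g) := by
  rw [← HB.counit_comul_right h, ← HB.counit_comul_right g]
  induction HB.comul h using TensorProduct.induction_on with
  | zero => simp
  | add p q hp hq => simp [add_tmul, hp, hq]
  | tmul x y =>
    induction HB.comul g using TensorProduct.induction_on with
    | zero => simp
    | add p q hp hq => simp [tmul_add, hp, hq]
    | tmul z w =>
      simp only [tensorTensorTensorComm_tmul, map_tmul, LinearMap.comp_apply, lift.tmul,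
        HB.counit_mul, rid_tmul, LinearMap.id_apply, smul_tmul_smul, map_smul]

variable (A : Type*) [AddCommGroup A] [Module K A]

def idTensorCounit : A ⊗[K] H →ₗ[K] A :=
  TensorProduct.rid K A ∘ₗ LinearMap.lTensor A HB.counit

variable {A}

@[simp] theorem idTensorCounit_tmul (a : A) (h : H) :
    HB.idTensorCounit A (a ⊗ₜ h) = HB.counit h • a := by
  simp [idTensorCounit]

theorem idTensorCounit_congr_str (e : A ≃ₗ[K] A) (x : A ⊗[K] H) :
    HB.idTensorCounit A (congr e HB.str x) = e (HB.idTensorCounit A x) := by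
  induction x using TensorProduct.induction_on with
  | zero => simp
  | add p q hp hq => simp [hp, hq]
  | tmul a h => simp [HB.counit_str]

end HomBialgebraStr

theorem HomAlgebraStr.isWeakHomBimodule_mul {K H M : Type*} [Field K] [AddCommGroup H]
    [Module K H] [AddCommGroup M] [Module K M] (HB : HomBialgebraStr K H)
    (MA : HomAlgebraStr K M) (ι : H →ₗ[K] M) (hι_one : ι HB.one = MA.one)
    (hι_str : ∀ h, ι (HB.str h) = MA.str (ι h)) :
    IsWeakHomBimodule HB MA.str.toLinearMap (MA.mul ∘ₗ ι) (MA.mul.compl₂ ι) := by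
  refine ⟨fun x => ?_, fun x => ?_, fun h x g => ?_⟩
  · simp [hι_one, MA.one_mul]
  · simp [hι_one, MA.mul_one]
  · simp [hι_str, MA.hom_assoc]

section CrossedProduct

variable {K H A : Type*} [Field K] [AddCommGroup H] [Module K H] [AddCommGroup A] [Module K A]
  (HB : HomBialgebraStr K H) (AA : HomAlgebraStr K A) (act : H →ₗ[K] A →ₗ[K] A)
  (σ : H →ₗ[K] H →ₗ[K] A) (m k : ℤ)

theorem idTensorCounit_cpMulElem (a : A) (h : H) (b : A) (g : H) :
    HB.idTensorCounit A (cpMulElem HB AA act σ m k a h b g) =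
      AA.mul a (lift AA.mul (map
        (act.flip ((AA.str ^ (-2 : ℤ)) b) ∘ₗ (HB.str ^ (m - 1)).toLinearMap)
        (σ.flip ((HB.str ^ (k - 1)) g) ∘ₗ (HB.str ^ k).toLinearMap) (HB.comul h))) := by
  have hQ : HB.counit ∘ₗ HB.str.toLinearMap ∘ₗ lift HB.mul = HB.counit ∘ₗ lift HB.mul := by
    ext; simp [HB.counit_str]
  rw [cpMulElem, HomBialgebraStr.idTensorCounit, LinearMap.comp_apply, LinearEquiv.coe_coe,
    LinearMap.lTensor, map_map, map_map, LinearMap.id_comp, LinearMap.comp_id, hQ,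
    HB.rid_map_counit_mul, LinearMap.comp_apply, map_tmul, HB.comul_str_symm]
  induction HB.comul h using TensorProduct.induction_on with
  | zero => simp
  | add p q hp hq => simp only [map_add, add_tmul, hp, hq]
  | tmul x y => simp [LinearEquiv.zpow_apply_symm_apply]

theorem idTensorCounit_cpMulElem_one_tmul
    (hact_one : ∀ h, act h AA.one = HB.counit h • AA.one) (a : A) (h g : H) :
    HB.idTensorCounit A (cpMulElem HB AA act σ m k a h AA.one g) =
      AA.mul a (AA.str (σ ((HB.str ^ (k - 1)) h) ((HB.str ^ (k - 1)) g))) := by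
  have h_counit := HB.lid_map_counit_comul
    (AA.str.toLinearMap ∘ₗ σ.flip ((HB.str ^ (k - 1)) g) ∘ₗ (HB.str ^ k).toLinearMap) h
  simp only [LinearMap.comp_apply, LinearMap.flip_apply, LinearEquiv.coe_coe,
    LinearEquiv.zpow_apply_symm_apply] at h_counit
  rw [idTensorCounit_cpMulElem, LinearEquiv.zpow_apply_eq_self AA.str_one, ← h_counit]
  induction HB.comul h using TensorProduct.induction_on with
  | zero => simp
  | add p q hp hq => simp only [map_add, hp, hq]
  | tmul x y => simp [hact_one, HB.counit_str_zpow, AA.one_mul]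

theorem idTensorCounit_cpMulElem_tmul_one
    (hσ_one : ∀ h, σ h HB.one = HB.counit h • AA.one) (a : A) (h : H) (b : A) :
    HB.idTensorCounit A (cpMulElem HB AA act σ m k a h b HB.one) =
      AA.mul a (AA.str (act ((HB.str ^ (m - 2)) h) ((AA.str ^ (-2 : ℤ)) b))) := by
  have h_counit := HB.rid_map_counit_comul
    (AA.str.toLinearMap ∘ₗ act.flip ((AA.str ^ (-2 : ℤ)) b) ∘ₗ (HB.str ^ (m - 1)).toLinearMap) h
  simp only [LinearMap.comp_apply, LinearMap.flip_apply, LinearEquiv.coe_coe,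
    LinearEquiv.zpow_apply_symm_apply, show m - 1 - 1 = m - 2 by ring] at h_counit
  rw [idTensorCounit_cpMulElem, HB.str_zpow_one, ← h_counit]
  induction HB.comul h using TensorProduct.induction_on with
  | zero => simp
  | add p q hp hq => simp only [map_add, hp, hq]
  | tmul x y => simp [hσ_one, HB.counit_str_zpow, AA.mul_one]

theorem philElem_eq_cpMulElem
    (hact_str : ∀ h a, AA.str (act h a) = act (HB.str h) (AA.str a))
    (hσ_str : ∀ x y, AA.str (σ x y) = σ (HB.str x) (HB.str y)) (l : H) (a : A) (h : H) :
    philElem HB AA act σ m k l a h = cpMulElem HB AA act σ m k AA.one ((HB.str ^ (-m)) l) a h := by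
  rw [philElem, cpMulElem, HB.comul_str_zpow]
  induction HB.comul l using TensorProduct.induction_on with
  | zero => simp
  | add p q hp hq => simp only [map_add, add_tmul, hp, hq]
  | tmul x y =>
    induction HB.comul h using TensorProduct.induction_on with
    | zero => simp
    | add p q hp hq => simp only [map_add, tmul_add, hp, hq]
    | tmul z w =>
      simp only [tensorTensorTensorComm_tmul, map_tmul, LinearMap.comp_apply, LinearEquiv.coe_coe,
        lift.tmul, LinearMap.id_apply, HB.comul_str_zpow, HB.str_mul, LinearEquiv.apply_zpow_apply]
      congr 1
      · induction HB.comul x using TensorProduct.induction_on with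
        | zero => simp
        | add p q hp hq => simp only [map_add, add_tmul, hp, hq]
        | tmul x₁ x₂ =>
          simp only [map_tmul, LinearMap.comp_apply, LinearEquiv.coe_coe, lift.tmul, assoc_tmul,
            LinearMap.flip_apply, AA.one_mul, AA.str_mul, hact_str, hσ_str,
            LinearEquiv.apply_zpow_apply, LinearEquiv.zpow_apply_zpow_apply, add_neg_cancel,
            zpow_zero, LinearEquiv.coe_one, id_eq]
          ring_nf
      · ring_nf

theorem phirElem_eq_cpMulElem (hact_one : ∀ h, act h AA.one = HB.counit h • AA.one)
    (hσ_str : ∀ x y, AA.str (σ x y) = σ (HB.str x) (HB.str y)) (a : A) (h l : H) :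
    phirElem HB AA σ m k a h l = cpMulElem HB AA act σ m k a h AA.one ((HB.str ^ (-m)) l) := by
  rw [phirElem, cpMulElem, HB.comul_str_zpow]
  induction HB.comul h using TensorProduct.induction_on with
  | zero => simp
  | add p q hp hq => simp only [map_add, add_tmul, hp, hq]
  | tmul x y =>
    induction HB.comul l using TensorProduct.induction_on with
    | zero => simp
    | add p q hp hq => simp only [map_add, tmul_add, hp, hq]
    | tmul z w =>
      simp only [tensorTensorTensorComm_tmul, map_tmul, LinearMap.comp_apply, LinearEquiv.coe_coe,
        lift.tmul, LinearMap.id_apply, HB.str_mul, LinearEquiv.apply_zpow_apply]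
      congr 1
      · conv_lhs => rw [← HB.str.apply_symm_apply x, ← HB.counit_comul_left x]
        rw [LinearEquiv.zpow_apply_eq_self AA.str_one]
        induction HB.comul x using TensorProduct.induction_on with
        | zero => simp
        | add p q hp hq => simp only [map_add, add_tmul, LinearMap.add_apply, hp, hq]
        | tmul x₁ x₂ =>
          simp only [map_tmul, lid_tmul, LinearMap.id_apply, map_smul, LinearMap.smul_apply,
            assoc_tmul, lift.tmul, LinearMap.comp_apply, LinearEquiv.coe_coe, LinearMap.flip_apply,
            hact_one, HB.counit_str_zpow, AA.one_mul, hσ_str, LinearEquiv.zpow_apply_apply,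
            LinearEquiv.apply_zpow_apply, LinearEquiv.zpow_apply_zpow_apply]
          ring_nf
      · ring_nf

end CrossedProduct

namespace IsRadfordBiproduct

variable {K H A : Type*} [Field K] [AddCommGroup H] [Module K H] [AddCommGroup A] [Module K A]
  {HB : HomBialgebraStr K H} {AA : HomAlgebraStr K A} {AC : HomCoalgebraStr K A}
  {act : H →ₗ[K] A →ₗ[K] A} {coact : A →ₗ[K] H ⊗[K] A} {σ : H →ₗ[K] H →ₗ[K] A} {m k : ℤ}
  {B : HomBialgebraStr K (A ⊗[K] H)}

theorem sigma_apply_one (hB : IsRadfordBiproduct HB AA AC act coact σ m k B)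
    (hact_one : ∀ h, act h AA.one = HB.counit h • AA.one) (x : H) :
    σ x HB.one = HB.counit x • AA.one := by
  obtain ⟨h, rfl⟩ := (HB.str ^ (k - 1)).surjective x
  have key := congrArg (HB.idTensorCounit A) (B.mul_one (AA.one ⊗ₜ h))
  rw [hB.one_def, hB.mul_def, idTensorCounit_cpMulElem_one_tmul HB AA act σ m k hact_one,
    HB.str_zpow_one, hB.str_def, congr_tmul, HB.idTensorCounit_tmul, AA.one_mul, AA.str_one,
    HB.counit_str] at key
  rw [HB.counit_str_zpow]
  apply AA.str.injective
  apply AA.str.injective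
  rw [key, map_smul, map_smul, AA.str_one, AA.str_one]

theorem str_sigma (hB : IsRadfordBiproduct HB AA AC act coact σ m k B)
    (hact_one : ∀ h, act h AA.one = HB.counit h • AA.one) (x y : H) :
    AA.str (σ x y) = σ (HB.str x) (HB.str y) := by
  obtain ⟨h, rfl⟩ := (HB.str ^ (k - 1)).surjective x
  obtain ⟨g, rfl⟩ := (HB.str ^ (k - 1)).surjective y
  have key := congrArg (HB.idTensorCounit A) (B.str_mul (AA.one ⊗ₜ h) (AA.one ⊗ₜ g))
  rw [hB.mul_def, hB.str_def, congr_tmul, congr_tmul, AA.str_one, hB.mul_def,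
    HB.idTensorCounit_congr_str, idTensorCounit_cpMulElem_one_tmul HB AA act σ m k hact_one,
    idTensorCounit_cpMulElem_one_tmul HB AA act σ m k hact_one, AA.one_mul, AA.one_mul] at key
  rw [LinearEquiv.zpow_apply_apply, LinearEquiv.zpow_apply_apply] at key
  rw [LinearEquiv.apply_zpow_apply, LinearEquiv.apply_zpow_apply]
  exact AA.str.injective (AA.str.injective key)

theorem str_act (hB : IsRadfordBiproduct HB AA AC act coact σ m k B)
    (hact_one : ∀ h, act h AA.one = HB.counit h • AA.one) (x : H) (a : A) :
    AA.str (act x a) = act (HB.str x) (AA.str a) := by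
  obtain ⟨h, rfl⟩ := (HB.str ^ (m - 2)).surjective x
  obtain ⟨b, rfl⟩ := (AA.str ^ (-2 : ℤ)).surjective a
  have hσ_one := hB.sigma_apply_one hact_one
  have key := congrArg (HB.idTensorCounit A) (B.str_mul (AA.one ⊗ₜ h) (b ⊗ₜ HB.one))
  rw [hB.mul_def, hB.str_def, congr_tmul, congr_tmul, AA.str_one, HB.str_one, hB.mul_def,
    HB.idTensorCounit_congr_str, idTensorCounit_cpMulElem_tmul_one HB AA act σ m k hσ_one,
    idTensorCounit_cpMulElem_tmul_one HB AA act σ m k hσ_one, AA.one_mul, AA.one_mul] at key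
  rw [LinearEquiv.zpow_apply_apply, LinearEquiv.zpow_apply_apply] at key
  rw [LinearEquiv.apply_zpow_apply, LinearEquiv.apply_zpow_apply]
  exact AA.str.injective (AA.str.injective key)

end IsRadfordBiproduct

theorem biproduct_weak_hom_bimodule_general
    {K H A : Type*} [Field K] [AddCommGroup H] [Module K H] [AddCommGroup A] [Module K A]
    (HB : HomBialgebraStr K H) (AA : HomAlgebraStr K A) (AC : HomCoalgebraStr K A)
    (act : H →ₗ[K] A →ₗ[K] A) (hact : IsWeakModuleAlgebra HB AA act)
    (coact : A →ₗ[K] H ⊗[K] A)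
    (σ : H →ₗ[K] H →ₗ[K] A)
    (m k : ℤ)
    (B : HomBialgebraStr K (A ⊗[K] H))
    (hB : IsRadfordBiproduct HB AA AC act coact σ m k B)
    (φl : H →ₗ[K] (A ⊗[K] H) →ₗ[K] (A ⊗[K] H))
    (hφl : ∀ (l : H) (a : A) (h : H), φl l (a ⊗ₜ[K] h) = philElem HB AA act σ m k l a h)
    (φr : (A ⊗[K] H) →ₗ[K] H →ₗ[K] (A ⊗[K] H))
    (hφr : ∀ (a : A) (h : H) (l : H), φr (a ⊗ₜ[K] h) l = phirElem HB AA σ m k a h l) :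
    IsWeakHomBimodule HB (TensorProduct.map AA.str.toLinearMap HB.str.toLinearMap) φl φr := by
  have hact_one := hact.act_one
  have hσ_str := hB.str_sigma hact_one
  let ι : H →ₗ[K] A ⊗[K] H := TensorProduct.mk K A H AA.one ∘ₗ (HB.str ^ (-m)).toLinearMap
  have hφl_eq : φl = B.mul ∘ₗ ι := LinearMap.ext fun l => TensorProduct.ext' fun a h => by
    simp [ι, hφl, hB.mul_def, philElem_eq_cpMulElem HB AA act σ m k (hB.str_act hact_one) hσ_str]
  have hφr_eq : φr = B.mul.compl₂ ι := TensorProduct.ext' fun a h => LinearMap.ext fun l => by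
    simp [ι, hφr, hB.mul_def, phirElem_eq_cpMulElem HB AA act σ m k hact_one hσ_str]
  have hι_one : ι HB.one = B.one := by
    simp only [ι, LinearMap.comp_apply, LinearEquiv.coe_coe, mk_apply, HB.str_zpow_one, hB.one_def]
  have hι_str (l : H) : ι (HB.str l) = B.str (ι l) := by
    simp only [ι, LinearMap.comp_apply, LinearEquiv.coe_coe, mk_apply, hB.str_def, congr_tmul,
      AA.str_one, LinearEquiv.zpow_apply_apply, LinearEquiv.apply_zpow_apply]
  have h_mul := HomAlgebraStr.isWeakHomBimodule_mul HB B.toHomAlgebraStr ι hι_one hι_str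
  rw [hB.str_def] at h_mul
  rwa [hφl_eq, hφr_eq]

/-- Lemma 4.9: `(A ♯_σ^× H, β ⊗ α, φ^l, φ^r)` is a weak `(H, α)` Hom-bimodule. -/
theorem biproduct_weak_hom_bimodule
    {K H A : Type*} [Field K] [AddCommGroup H] [Module K H] [AddCommGroup A] [Module K A]
    (HB : HomBialgebraStr K H) (AA : HomAlgebraStr K A) (AC : HomCoalgebraStr K A)
    (act : H →ₗ[K] A →ₗ[K] A) (hact : IsWeakModuleAlgebra HB AA act)
    (coact : A →ₗ[K] H ⊗[K] A) (hcc : IsComoduleCoalgebra HB AC coact)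
    (σ σinv : H →ₗ[K] H →ₗ[K] A)
    (hconv : IsConvInvPair HB AA σ σinv) (m k : ℤ)
    (B : HomBialgebraStr K (A ⊗[K] H))
    (hB : IsRadfordBiproduct HB AA AC act coact σ m k B)
    (φl : H →ₗ[K] (A ⊗[K] H) →ₗ[K] (A ⊗[K] H))
    (hφl : ∀ (l : H) (a : A) (h : H), φl l (a ⊗ₜ[K] h) = philElem HB AA act σ m k l a h)
    (φr : (A ⊗[K] H) →ₗ[K] H →ₗ[K] (A ⊗[K] H))
    (hφr : ∀ (a : A) (h : H) (l : H), φr (a ⊗ₜ[K] h) l = phirElem HB AA σ m k a h l) :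
    IsWeakHomBimodule HB (TensorProduct.map AA.str.toLinearMap HB.str.toLinearMap) φl φr :=
  biproduct_weak_hom_bimodule_general HB AA AC act hact coact σ m k B hB φl hφl φr hφr
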